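/- arXiv:2211.13467 — 3 statements merged into one kernel-verified Lean document; each statement's English description precedes it below -/
import Mathlib

section
/- Under the stochastic sampling design, monomial notation and kernel conditions, assume h_j → 0 for each j, n·h_1⋯h_d → ∞, and g continuous at 0. Then every entry of the random D×D matrix S_n(0) := (n h_1⋯h_d)^{−1}·Σ_{i=1}^n K_{Ah}(X_i)·H^{−1}(X_i/A_n)̌·((X_i/A_n)̌)'H^{−1} converges in probability, as n → ∞, to the corresponding entry of g(0)·S, where S := ∫_{ℝ^d} ž ž' K(z)dz. -/
set_option autoImplicit false

open MeasureTheory ProbabilityTheory Filter Topology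

noncomputable section

/-- Multi-indices of total degree at most `p`, encoded as exponent vectors. -/
def Idx (d p : ℕ) := {ν : Fin d → Fin (p + 1) // ∑ j, (ν j : ℕ) ≤ p}

instance (d p : ℕ) : Fintype (Idx d p) := Subtype.fintype _
instance (d p : ℕ) : DecidableEq (Idx d p) := Subtype.instDecidableEq

/-- Monomial `x^ν`. -/
def mono {d : ℕ} (x : Fin d → ℝ) (ν : Fin d → ℕ) : ℝ := ∏ j, x j ^ ν j

/-- `x/A_n`, componentwise rescaling. -/
def scaled {d : ℕ} (A x : Fin d → ℝ) : Fin d → ℝ := fun j => x j / A j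

/-- `K_{Ah}(x) = K(x₁/(A₁h₁),…,x_d/(A_dh_d))`. -/
def KAh {d : ℕ} (K : (Fin d → ℝ) → ℝ) (A h x : Fin d → ℝ) : ℝ :=
  K fun j => x j / (A j * h j)

/-- The cube `R₀ = [−1/2,1/2]^d`. -/
def R0 (d : ℕ) : Set (Fin d → ℝ) :=
  Set.Icc (fun _ => -(1/2 : ℝ)) (fun _ => (1/2 : ℝ))

/-- The kernel moment matrix `S = ∫ ž ž' K(z) dz`. -/
def Smat (d p : ℕ) (K : (Fin d → ℝ) → ℝ) : Matrix (Idx d p) (Idx d p) ℝ :=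
  fun ν μ => ∫ z : Fin d → ℝ,
    mono z (fun j => (ν.1 j : ℕ)) * mono z (fun j => (μ.1 j : ℕ)) * K z

/-! Each entry of `S_n(0)` is a normalised sum `(n h₁⋯h_d)⁻¹ Σᵢ F(Xᵢ/(A_n h))` with
`F(z) = K(z) z^ν z^μ` bounded and vanishing off `R₀`. The substitution `x = A_n h z` in the
design density gives `E F(Xᵢ/(A_n h)) = h₁⋯h_d ∫ g(h z) F(z) dz`, so the mean of the sum is
`∫ g(h z) F(z) dz → g(0) ∫ F` by dominated convergence, while by independence its variance is at
most `(n h₁⋯h_d)⁻¹ ∫ g(h z) F(z)² dz → 0`. Chebyshev's inequality concludes.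
-/

theorem integral_comp_pi_mul_left {ι E : Type*} [Fintype ι] [NormedAddCommGroup E]
    [NormedSpace ℝ E] {c : ι → ℝ} (hc : ∀ j, 0 < c j) (ψ : (ι → ℝ) → E) :
    ∫ z : ι → ℝ, ψ (fun j => c j * z j) = (∏ j, c j)⁻¹ • ∫ x, ψ x := by
  classical
  set L : (ι → ℝ) →ₗ[ℝ] (ι → ℝ) := Matrix.toLin' (Matrix.diagonal c)
  have hL : ⇑L = ⇑(Homeomorph.piCongrRight fun j => Homeomorph.mulLeft₀ (c j) (hc j).ne') := by
    funext z j
    simp [L, Matrix.mulVec_diagonal]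
  have hdet : LinearMap.det L = ∏ j, c j := by
    rw [← LinearMap.det_toMatrix', LinearMap.toMatrix'_toLin', Matrix.det_diagonal]
  have hpos : 0 < ∏ j, c j := Finset.prod_pos fun j _ => hc j
  have hmap :=
    Real.map_linearMap_volume_pi_eq_smul_volume_pi (hdet ▸ hpos.ne' : LinearMap.det L ≠ 0)
  rw [hdet, abs_inv, abs_of_pos hpos] at hmap
  calc ∫ z : ι → ℝ, ψ (fun j => c j * z j) = ∫ z, ψ (L z) := by rw [hL]; rfl
    _ = (∏ j, c j)⁻¹ • ∫ x, ψ x := by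
      rw [← (hL ▸ Homeomorph.measurableEmbedding _ : MeasurableEmbedding L).integral_map, hmap,
        integral_smul_measure, ENNReal.toReal_ofReal (by positivity)]

theorem integral_comp_eq_integral_density_mul {Ω α : Type*} [MeasurableSpace Ω]
    [MeasurableSpace α] {P : Measure Ω} {μ : Measure α} {Y : Ω → α} (hY : Measurable Y)
    {ρ : α → ℝ} (hρ : Measurable ρ) (hρ0 : ∀ x, 0 ≤ ρ x)
    (hlaw : P.map Y = μ.withDensity fun x => ENNReal.ofReal (ρ x))
    {f : α → ℝ} (hf : Measurable f) :
    ∫ ω, f (Y ω) ∂P = ∫ x, ρ x * f x ∂μ := by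
  rw [← integral_map hY.aemeasurable hf.aestronglyMeasurable, hlaw,
    integral_withDensity_eq_integral_toReal_smul hρ.ennreal_ofReal
      (Eventually.of_forall fun _ => ENNReal.ofReal_lt_top)]
  simp_rw [ENNReal.toReal_ofReal (hρ0 _), smul_eq_mul]

theorem integral_comp_div_mul_of_scaled_density {Ω : Type*} [MeasurableSpace Ω] {P : Measure Ω}
    {d : ℕ} {A h : Fin d → ℝ} (hA : ∀ j, 0 < A j) (hh : ∀ j, 0 < h j)
    {g : (Fin d → ℝ) → ℝ} (hg : Measurable g) (hg0 : ∀ x, 0 ≤ g x)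
    {X : Ω → Fin d → ℝ} (hX : Measurable X)
    (hlaw : P.map X = volume.withDensity fun x =>
      ENNReal.ofReal ((∏ j, A j)⁻¹ * g (scaled A x)))
    {φ : (Fin d → ℝ) → ℝ} (hφ : Measurable φ) :
    ∫ ω, φ (fun j => X ω j / (A j * h j)) ∂P =
      (∏ j, h j) * ∫ z, g (fun j => h j * z j) * φ z := by
  have hAh : ∀ j, 0 < A j * h j := fun j => mul_pos (hA j) (hh j)
  have hprodA : 0 < ∏ j, A j := Finset.prod_pos fun j _ => hA j
  have hscaled : Measurable fun x : Fin d → ℝ => scaled A x :=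
    measurable_pi_lambda _ fun j => (measurable_pi_apply j).div_const _
  have hdiv : Measurable fun x : Fin d → ℝ => fun j => x j / (A j * h j) :=
    measurable_pi_lambda _ fun j => (measurable_pi_apply j).div_const _
  rw [integral_comp_eq_integral_density_mul hX (ρ := fun x => (∏ j, A j)⁻¹ * g (scaled A x))
    (measurable_const.mul (hg.comp hscaled)) (fun x => mul_nonneg (inv_nonneg.2 hprodA.le) (hg0 _))
    hlaw (f := fun x => φ fun j => x j / (A j * h j)) (hφ.comp hdiv)]
  have hcov := integral_comp_pi_mul_left hAh
    fun x => (∏ j, A j)⁻¹ * g (scaled A x) * φ fun j => x j / (A j * h j)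
  have hsubst : ∀ z : Fin d → ℝ, (∏ j, A j)⁻¹ * g (scaled A fun j => A j * h j * z j) *
      φ (fun j => A j * h j * z j / (A j * h j)) =
        (∏ j, A j)⁻¹ * (g (fun j => h j * z j) * φ z) := by
    intro z
    have e1 : scaled A (fun j => A j * h j * z j) = fun j => h j * z j := by
      funext j; simp only [scaled]; field_simp [(hA j).ne']
    have e2 : (fun j => A j * h j * z j / (A j * h j)) = z := by
      funext j; exact mul_div_cancel_left₀ _ (hAh j).ne'
    rw [e1, e2, mul_assoc]
  simp only [hsubst, integral_const_mul, smul_eq_mul, Finset.prod_mul_distrib] at hcov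
  rw [eq_inv_mul_iff_mul_eq₀ (mul_pos hprodA (Finset.prod_pos fun j _ => hh j)).ne'] at hcov
  rw [← hcov]
  field_simp

theorem tendsto_integral_comp_mul_mul {ι : Type*} [Fintype ι] {g : (ι → ℝ) → ℝ}
    (hg : Measurable g) {Cg : ℝ} (hgbd : ∀ x, |g x| ≤ Cg) (hgc : ContinuousAt g 0)
    {h : ℕ → ι → ℝ} (hh : ∀ j, Tendsto (fun n => h n j) atTop (𝓝 0))
    {F : (ι → ℝ) → ℝ} (hF : Integrable F) :
    Tendsto (fun n => ∫ z, g (fun j => h n j * z j) * F z) atTop (𝓝 (g 0 * ∫ z, F z)) := by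
  rw [← integral_const_mul]
  refine tendsto_integral_of_dominated_convergence (fun z => Cg * ‖F z‖)
    (fun n => ((hg.comp (measurable_pi_lambda _ fun j =>
      (measurable_pi_apply j).const_mul _)).aestronglyMeasurable).mul hF.1)
    (hF.norm.const_mul Cg) (fun n => Eventually.of_forall fun z => ?_)
    (Eventually.of_forall fun z => ?_)
  · rw [norm_mul, Real.norm_eq_abs]
    exact mul_le_mul_of_nonneg_right (hgbd _) (norm_nonneg _)
  · refine (hgc.tendsto.comp ?_).mul_const _
    rw [tendsto_pi_nhds]
    intro j
    simpa using (hh j).mul_const (z j)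

theorem tendsto_measure_abs_sub_gt_of_tendsto_variance {Ω : Type*} [MeasurableSpace Ω]
    {P : Measure Ω} [IsFiniteMeasure P] {T : ℕ → Ω → ℝ} (hT : ∀ n, MemLp (T n) 2 P) {L : ℝ}
    (hmean : Tendsto (fun n => ∫ ω, T n ω ∂P) atTop (𝓝 L))
    (hvar : Tendsto (fun n => variance (T n) P) atTop (𝓝 0)) {δ : ℝ} (hδ : 0 < δ) :
    Tendsto (fun n => (P {ω | δ < |T n ω - L|}).toReal) atTop (𝓝 0) := by
  refine squeeze_zero' (Eventually.of_forall fun n => ENNReal.toReal_nonneg) ?_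
    (by simpa using hvar.div_const ((δ / 2) ^ 2))
  filter_upwards [Metric.tendsto_nhds.1 hmean (δ / 2) (by positivity)] with n hn
  rw [Real.dist_eq] at hn
  have hsub : {ω | δ < |T n ω - L|} ⊆ {ω | δ / 2 ≤ |T n ω - ∫ ω, T n ω ∂P|} := by
    intro ω hω
    have := abs_sub_le (T n ω) (∫ ω, T n ω ∂P) L
    simp only [Set.mem_ofPred_eq] at hω ⊢
    linarith
  calc (P {ω | δ < |T n ω - L|}).toReal
      ≤ (P {ω | δ / 2 ≤ |T n ω - ∫ ω, T n ω ∂P|}).toReal :=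
        ENNReal.toReal_mono (measure_ne_top _ _) (measure_mono hsub)
    _ ≤ (ENNReal.ofReal (variance (T n) P / (δ / 2) ^ 2)).toReal :=
        ENNReal.toReal_mono ENNReal.ofReal_ne_top
          (meas_ge_le_variance_div_sq (hT n) (by positivity))
    _ = variance (T n) P / (δ / 2) ^ 2 :=
        ENNReal.toReal_ofReal (div_nonneg (variance_nonneg _ _) (by positivity))

theorem variance_const_mul_sum_le {Ω : Type*} [MeasurableSpace Ω] {P : Measure Ω}
    [IsProbabilityMeasure P] {n : ℕ} {Z : ℕ → Ω → ℝ} (hZ : ∀ i, MemLp (Z i) 2 P)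
    (hind : iIndepFun (fun i : Fin n => Z i) P) {s : ℝ}
    (hs : ∀ i < n, ∫ ω, Z i ω ^ 2 ∂P ≤ s) (c : ℝ) :
    variance (fun ω => c * ∑ i ∈ Finset.range n, Z i ω) P ≤ c ^ 2 * (n * s) := by
  have hpair : Set.Pairwise ↑(Finset.range n) fun i j => IndepFun (Z i) (Z j) P := by
    intro i hi j hj hij
    exact hind.indepFun (i := ⟨i, Finset.mem_range.1 hi⟩) (j := ⟨j, Finset.mem_range.1 hj⟩)
      (by simpa [Fin.ext_iff] using hij)
  have hsum : (fun ω => ∑ i ∈ Finset.range n, Z i ω) = ∑ i ∈ Finset.range n, Z i := by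
    funext ω; simp
  rw [variance_const_mul, hsum, IndepFun.variance_sum (fun i _ => hZ i) hpair]
  refine mul_le_mul_of_nonneg_left ?_ (sq_nonneg c)
  calc ∑ i ∈ Finset.range n, variance (Z i) P ≤ ∑ _i ∈ Finset.range n, s := by
        refine Finset.sum_le_sum fun i hi => ?_
        refine (variance_le_expectation_sq (hZ i).1).trans ?_
        simpa using hs i (Finset.mem_range.1 hi)
    _ = n * s := by simp

theorem tendsto_measure_abs_normalized_sum_sub {Ω : Type*} [MeasurableSpace Ω] {P : Measure Ω}
    [IsProbabilityMeasure P] {d : ℕ} {A h : ℕ → Fin d → ℝ}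
    (hApos : ∀ n j, 0 < A n j) (hhpos : ∀ n j, 0 < h n j)
    (hh0 : ∀ j, Tendsto (fun n => h n j) atTop (𝓝 0))
    (hnh : Tendsto (fun n : ℕ => (n : ℝ) * ∏ j, h n j) atTop atTop)
    {X : ℕ → ℕ → Ω → (Fin d → ℝ)} (hXmeas : ∀ n i, Measurable (X n i))
    {g : (Fin d → ℝ) → ℝ} (hgmeas : Measurable g) {Cg : ℝ} (hgbd : ∀ x, |g x| ≤ Cg)
    (hgnonneg : ∀ x, 0 ≤ g x) (hgcont : ContinuousAt g 0)
    (hXdens : ∀ n i, i < n → Measure.map (X n i) P = volume.withDensity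
      fun x => ENNReal.ofReal ((∏ j, A n j)⁻¹ * g (scaled (A n) x)))
    (hXindep : ∀ n, iIndepFun (fun i : Fin n => X n i) P)
    {F : (Fin d → ℝ) → ℝ} (hFmeas : Measurable F) {CF : ℝ} (hFbd : ∀ z, |F z| ≤ CF)
    (hFint : Integrable F) {δ : ℝ} (hδ : 0 < δ) :
    Tendsto (fun n : ℕ => (P {ω | δ < |(1 / ((n : ℝ) * ∏ j, h n j)) *
        (∑ i ∈ Finset.range n, F (fun j => X n i ω j / (A n j * h n j))) -
        g 0 * ∫ z, F z|}).toReal) atTop (𝓝 0) := by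
  set c : ℕ → ℝ := fun n => 1 / ((n : ℝ) * ∏ j, h n j) with hc
  set Z : ℕ → ℕ → Ω → ℝ := fun n i ω => F (fun j => X n i ω j / (A n j * h n j))
  have hdiv : ∀ n, Measurable fun x : Fin d → ℝ => fun j => x j / (A n j * h n j) :=
    fun n => measurable_pi_lambda _ fun j => (measurable_pi_apply j).div_const _
  have hZ : ∀ n i, MemLp (Z n i) 2 P := fun n i =>
    memLp_of_bounded (Eventually.of_forall fun ω => abs_le.1 (hFbd _))
      ((hFmeas.comp (hdiv n)).comp (hXmeas n i)).aestronglyMeasurable 2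
  have hmoment : ∀ φ : (Fin d → ℝ) → ℝ, Measurable φ → ∀ n, ∀ i < n,
      ∫ ω, φ (fun j => X n i ω j / (A n j * h n j)) ∂P =
        (∏ j, h n j) * ∫ z, g (fun j => h n j * z j) * φ z := fun φ hφ n i hi =>
    integral_comp_div_mul_of_scaled_density (hApos n) (hhpos n) hgmeas hgnonneg (hXmeas n i)
      (hXdens n i hi) hφ
  have hprod : ∀ n, (∏ j, h n j) ≠ 0 := fun n => (Finset.prod_pos fun j _ => hhpos n j).ne'
  have hmean : ∀ n, 1 ≤ n → ∫ ω, c n * ∑ i ∈ Finset.range n, Z n i ω ∂P =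
      ∫ z, g (fun j => h n j * z j) * F z := by
    intro n hn
    rw [integral_const_mul, integral_finsetSum _ fun i _ => (hZ n i).integrable one_le_two,
      Finset.sum_congr rfl fun i hi => hmoment F hFmeas n i (Finset.mem_range.1 hi),
      Finset.sum_const, Finset.card_range, nsmul_eq_mul, hc]
    field_simp [hprod n, (by positivity : (n : ℝ) ≠ 0)]
  have hvar : ∀ n, 1 ≤ n → variance (fun ω => c n * ∑ i ∈ Finset.range n, Z n i ω) P ≤
      c n * ∫ z, g (fun j => h n j * z j) * F z ^ 2 := by
    intro n hn
    refine (variance_const_mul_sum_le (hZ n)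
      ((hXindep n).comp _ fun _ => hFmeas.comp (hdiv n))
      (fun i hi => (hmoment (fun z => F z ^ 2) (hFmeas.pow_const 2) n i hi).le) (c n)).trans_eq ?_
    rw [hc]
    field_simp [hprod n, (by positivity : (n : ℝ) ≠ 0)]
  have hF2 : Integrable fun z => F z ^ 2 := by
    simpa [sq] using hFint.bdd_mul hFmeas.aestronglyMeasurable
      (Eventually.of_forall fun z => (Real.norm_eq_abs _).trans_le (hFbd z))
  have hc0 : Tendsto c atTop (𝓝 0) := by
    simpa only [hc, one_div, Pi.inv_def] using hnh.inv_tendsto_atTop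
  refine tendsto_measure_abs_sub_gt_of_tendsto_variance
    (fun n => (memLp_finsetSum _ fun i _ => hZ n i).const_mul (c n))
    ((tendsto_integral_comp_mul_mul hgmeas hgbd hgcont hh0 hFint).congr' ?_) ?_ hδ
  · filter_upwards [eventually_ge_atTop 1] with n hn using (hmean n hn).symm
  · refine squeeze_zero' (Eventually.of_forall fun n => variance_nonneg _ _) ?_
      (by simpa using hc0.mul (tendsto_integral_comp_mul_mul hgmeas hgbd hgcont hh0 hF2))
    filter_upwards [eventually_ge_atTop 1] with n hn using hvar n hn

theorem continuous_mono {d : ℕ} (e : Fin d → ℕ) : Continuous fun x : Fin d → ℝ => mono x e :=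
  continuous_finsetProd _ fun j _ => (continuous_apply j).pow _

theorem abs_mono_le_one {d : ℕ} {x : Fin d → ℝ} (hx : ∀ j, |x j| ≤ 1) (e : Fin d → ℕ) :
    |mono x e| ≤ 1 := by
  rw [mono, Finset.abs_prod]
  exact Finset.prod_le_one (fun j _ => abs_nonneg _) fun j _ =>
    (abs_pow _ _).trans_le (pow_le_one₀ (abs_nonneg _) (hx j))

theorem abs_le_one_of_mem_R0 {d : ℕ} {z : Fin d → ℝ} (hz : z ∈ R0 d) (j : Fin d) :
    |z j| ≤ 1 := by
  rw [abs_le]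
  constructor <;> linarith [hz.1 j, hz.2 j]

theorem integrable_of_abs_le_of_eq_zero_off_R0 {d : ℕ} {F : (Fin d → ℝ) → ℝ}
    (hF : Measurable F) {C : ℝ} (hC : ∀ z, |F z| ≤ C) (hsupp : ∀ z, z ∉ R0 d → F z = 0) :
    Integrable F := by
  rw [← integrableOn_iff_integrable_of_support_subset (s := R0 d)
    fun z hz => by_contra fun h => hz (hsupp z h)]
  exact Measure.integrableOn_of_bounded measure_Icc_lt_top.ne hF.aestronglyMeasurable
    (Eventually.of_forall hC)

theorem abs_mul_mono_mul_mono_le {d : ℕ} {K : (Fin d → ℝ) → ℝ} {CK : ℝ}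
    (hKbd : ∀ z, |K z| ≤ CK) (hKsupp : ∀ z, z ∉ R0 d → K z = 0) (e e' : Fin d → ℕ)
    (z : Fin d → ℝ) : |K z * (mono z e * mono z e')| ≤ CK := by
  by_cases hz : z ∈ R0 d
  · rw [abs_mul, abs_mul]
    calc |K z| * (|mono z e| * |mono z e'|) ≤ CK * (1 * 1) := by
          gcongr
          · exact (abs_nonneg _).trans (hKbd z)
          · exact hKbd z
          · exact abs_mono_le_one (abs_le_one_of_mem_R0 hz) e
          · exact abs_mono_le_one (abs_le_one_of_mem_R0 hz) e'
      _ = CK := by ring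
  · rw [hKsupp z hz, zero_mul, abs_zero]
    exact (abs_nonneg _).trans (hKbd z)

theorem design_matrix_consistency_general
    {Ω : Type*} [MeasurableSpace Ω] (P : Measure Ω) [IsProbabilityMeasure P]
    (d p : ℕ)
    (A h : ℕ → Fin d → ℝ)
    (hApos : ∀ n j, 0 < A n j) (hhpos : ∀ n j, 0 < h n j)
    (hh0 : ∀ j, Tendsto (fun n => h n j) atTop (𝓝 0))
    (hnh : Tendsto (fun n : ℕ => (n : ℝ) * ∏ j, h n j) atTop atTop)
    (X : ℕ → ℕ → Ω → (Fin d → ℝ))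
    (hXmeas : ∀ n i, Measurable (X n i))
    (g : (Fin d → ℝ) → ℝ)
    (hgmeas : Measurable g) (Cg : ℝ) (hgbd : ∀ x, |g x| ≤ Cg)
    (hgnonneg : ∀ x, 0 ≤ g x)
    (hgcont : ContinuousAt g 0)
    (hXdens : ∀ n i, i < n → Measure.map (X n i) P =
      volume.withDensity (fun x =>
        ENNReal.ofReal ((∏ j, A n j)⁻¹ * g (scaled (A n) x))))
    (hXindep : ∀ n, iIndepFun (fun i : Fin n => X n i) P)
    (K : (Fin d → ℝ) → ℝ)
    (hKmeas : Measurable K) (CK : ℝ) (hKbd : ∀ z, |K z| ≤ CK)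
    (hKsupp : ∀ z, z ∉ R0 d → K z = 0) :
    ∀ ν μ : Idx d p, ∀ δ : ℝ, 0 < δ →
      Tendsto (fun n : ℕ =>
          (P {ω | δ < |(1 / ((n : ℝ) * ∏ j, h n j)) *
              (∑ i ∈ Finset.range n, KAh K (A n) (h n) (X n i ω) *
                (mono (fun j => X n i ω j / (A n j * h n j)) (fun j => (ν.1 j : ℕ)) *
                 mono (fun j => X n i ω j / (A n j * h n j)) (fun j => (μ.1 j : ℕ)))) -
              g 0 * Smat d p K ν μ|}).toReal)
        atTop (𝓝 0) := by
  intro ν μ δ hδ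
  have hFmeas : Measurable fun z => K z *
      (mono z (fun j => (ν.1 j : ℕ)) * mono z (fun j => (μ.1 j : ℕ))) :=
    hKmeas.mul ((continuous_mono _).measurable.mul (continuous_mono _).measurable)
  have hFbd := abs_mul_mono_mul_mono_le hKbd hKsupp (fun j => (ν.1 j : ℕ)) (fun j => (μ.1 j : ℕ))
  have hS : Smat d p K ν μ = ∫ z, K z *
      (mono z (fun j => (ν.1 j : ℕ)) * mono z (fun j => (μ.1 j : ℕ))) := by
    simp only [Smat, mul_comm (K _)]
  rw [hS]
  have hFint := integrable_of_abs_le_of_eq_zero_off_R0 hFmeas hFbd fun z hz => by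
    rw [hKsupp z hz, zero_mul]
  exact tendsto_measure_abs_normalized_sum_sub hApos hhpos hh0 hnh hXmeas hgmeas hgbd hgnonneg
    hgcont hXdens hXindep hFmeas hFbd hFint hδ

/-- under the stochastic sampling design, monomial notation and kernel
conditions, with `h_j → 0` and `n h₁⋯h_d → ∞` and `g` continuous at 0, every entry of
`S_n(0) = (n h₁⋯h_d)^{−1} Σᵢ K_{Ah}(Xᵢ) H^{−1}(Xᵢ/A_n)̌ ((Xᵢ/A_n)̌)' H^{−1}`
converges in probability to the corresponding entry of `g(0)·S`. -/
theorem design_matrix_consistency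
    {Ω : Type*} [MeasurableSpace Ω] (P : Measure Ω) [IsProbabilityMeasure P]
    (d p : ℕ) (hd : 1 ≤ d) (hp : 1 ≤ p)
    (A h : ℕ → Fin d → ℝ)
    (hApos : ∀ n j, 0 < A n j) (hhpos : ∀ n j, 0 < h n j)
    (hAinf : ∀ j, Tendsto (fun n => A n j) atTop atTop)
    (hh0 : ∀ j, Tendsto (fun n => h n j) atTop (𝓝 0))
    (hnh : Tendsto (fun n : ℕ => (n : ℝ) * ∏ j, h n j) atTop atTop)
    (X : ℕ → ℕ → Ω → (Fin d → ℝ))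
    (hXmeas : ∀ n i, Measurable (X n i))
    (g : (Fin d → ℝ) → ℝ)
    (hgmeas : Measurable g) (Cg : ℝ) (hgbd : ∀ x, |g x| ≤ Cg)
    (hgnonneg : ∀ x, 0 ≤ g x)
    (hgsupp : ∀ x, x ∉ R0 d → g x = 0)
    (hgint : ∫ x : Fin d → ℝ, g x = 1)
    (hgcont : ContinuousAt g 0)
    (hXdens : ∀ n i, i < n → Measure.map (X n i) P =
      volume.withDensity (fun x =>
        ENNReal.ofReal ((∏ j, A n j)⁻¹ * g (scaled (A n) x))))
    (hXindep : ∀ n, iIndepFun (fun i : Fin n => X n i) P)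
    (K : (Fin d → ℝ) → ℝ)
    (hKmeas : Measurable K) (CK : ℝ) (hKbd : ∀ z, |K z| ≤ CK)
    (hKsupp : ∀ z, z ∉ R0 d → K z = 0)
    (hKint : ∫ z : Fin d → ℝ, K z = 1) :
    ∀ ν μ : Idx d p, ∀ δ : ℝ, 0 < δ →
      Tendsto (fun n : ℕ =>
          (P {ω | δ < |(1 / ((n : ℝ) * ∏ j, h n j)) *
              (∑ i ∈ Finset.range n, KAh K (A n) (h n) (X n i ω) *
                (mono (fun j => X n i ω j / (A n j * h n j)) (fun j => (ν.1 j : ℕ)) *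
                 mono (fun j => X n i ω j / (A n j * h n j)) (fun j => (μ.1 j : ℕ)))) -
              g 0 * Smat d p K ν μ|}).toReal)
        atTop (𝓝 0) :=
  design_matrix_consistency_general P d p A h hApos hhpos hh0 hnh X hXmeas g hgmeas Cg hgbd hgnonneg
    hgcont hXdens hXindep K hKmeas CK hKbd hKsupp
end
end

section
/- Let σ ∈ L¹(ℝ^d), let K : ℝ^d → ℝ be bounded measurable with support contained in [−1/2,1/2]^d, and let w : ℝ^d → ℝ be bounded measurable and continuous at 0. Let (h_{n,1},…,h_{n,d}) and (A_{n,1},…,A_{n,d}) be positive sequences with h_{n,j} → 0 and A_{n,j}h_{n,j} → ∞ for each j as n → ∞. Then, writing K_{h_n}(y) := K(y_1/h_{n,1},…,y_d/h_{n,d}), σ(A_n∘u) := σ(A_{n,1}u_1,…,A_{n,d}u_d), |A_n| := ∏_j A_{n,j}, |h_n| := ∏_j h_{n,j}: ( |A_n|/|h_n| )·∫_{ℝ^d}∫_{ℝ^d} σ(A_n∘(y_1−y_2))·K_{h_n}(y_1)K_{h_n}(y_2)·w(y_1)w(y_2)·dy_1dy_2 → w(0)²·( ∫_{ℝ^d}σ(v)dv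 )·( ∫_{ℝ^d}K²(z)dz ) as n → ∞. -/
/-!
Substituting `y₂ = y₁ - A_n⁻¹ ∘ u` and then `y₁ = h_n ∘ z` absorbs the factor
`|A_n| / |h_n|` and turns the double integral into `∫ σ(u) I_n(u) du` with
`I_n(u) = ∫ K(z) K(z - (A_n ∘ h_n)⁻¹ ∘ u) w(h_n ∘ z) w(h_n ∘ z - A_n⁻¹ ∘ u) dz`
(the integrand of `I_n(u)` is `overlapIntegrand`).
For fixed `u` the shift `(A_n ∘ h_n)⁻¹ ∘ u` tends to `0`, so `I_n(u) → w(0)² ∫ K²` by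
continuity of translation in `L¹`. Since `I_n(u)` is bounded uniformly in `n` and `u`,
dominated convergence against `|σ|` gives the limit.
-/

set_option autoImplicit false

open MeasureTheory Filter Topology

noncomputable section

section Translation

variable {G E : Type*} [AddGroup G] [TopologicalSpace G] [IsTopologicalAddGroup G]
  [MeasurableSpace G] [BorelSpace G] {μ : Measure G} [IsLocallyFiniteMeasure μ]
  [μ.InnerRegularCompactLTTop] [μ.IsAddLeftInvariant] [NormedAddCommGroup E]

theorem MeasureTheory.Integrable.tendsto_integral_norm_comp_add_sub {f : G → E}
    (hf : Integrable f μ) :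
    Tendsto (fun t => ∫ x, ‖f (t + x) - f x‖ ∂μ) (𝓝 0) (𝓝 0) := by
  have : Fact ((1 : ENNReal) ≠ ⊤) := ⟨ENNReal.one_ne_top⟩
  set F := hf.toL1 f
  have hnorm (t : G) : ∫ x, ‖f (t + x) - f x‖ ∂μ = ‖(DomAddAct.mk t +ᵥ F) - F‖ := by
    rw [L1.norm_eq_integral_norm]
    refine integral_congr_ae ?_
    have hF : (fun x => F (t + x)) =ᵐ[μ] fun x => f (t + x) :=
      (measurePreserving_add_left μ t).quasiMeasurePreserving.ae_eq_comp hf.coeFn_toL1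
    filter_upwards [Lp.coeFn_sub (DomAddAct.mk t +ᵥ F) F,
      DomAddAct.vadd_Lp_ae_eq (DomAddAct.mk t) F, hF, hf.coeFn_toL1] with x h₁ h₂ h₃ h₄
    rw [h₁, Pi.sub_apply, h₂, Equiv.symm_apply_apply, vadd_eq_add, h₃, h₄]
  have hcont : Continuous fun t : G => DomAddAct.mk t +ᵥ F :=
    DomAddAct.continuous_mk.vadd continuous_const
  have := (hcont.tendsto 0).sub_const F
  simp only [DomAddAct.mk_zero, zero_vadd, sub_self] at this
  simpa only [hnorm, norm_zero] using this.norm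

end Translation

section ShiftedProduct

variable {G ι : Type*} [AddCommGroup G] [TopologicalSpace G] [IsTopologicalAddGroup G]
  [MeasurableSpace G] [BorelSpace G] {μ : Measure G} [IsLocallyFiniteMeasure μ]
  [μ.InnerRegularCompactLTTop] [μ.IsAddLeftInvariant]

theorem tendsto_integral_mul_comp_sub_mul {l : Filter ι} [l.IsCountablyGenerated]
    {K : G → ℝ} (hK : Integrable K μ) {CK : ℝ} (hKbd : ∀ z, |K z| ≤ CK)
    {b : ι → G} (hb : Tendsto b l (𝓝 0))
    {ψ : ι → G → ℝ} (hψm : ∀ n, AEStronglyMeasurable (ψ n) μ) {C : ℝ}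
    (hψbd : ∀ n z, |ψ n z| ≤ C) {c : ℝ}
    (hψ : ∀ z, Tendsto (fun n => ψ n z) l (𝓝 c)) :
    Tendsto (fun n => ∫ z, K z * K (z - b n) * ψ n z ∂μ) l
      (𝓝 (c * ∫ z, K z ^ 2 ∂μ)) := by
  -- Split `K z * K (z - b n) = K z * (K (z - b n) - K z) + K z ^ 2`: the first part vanishes
  -- in the limit by continuity of translation in `L¹`, the second by dominated convergence.
  have hCK : 0 ≤ CK := (abs_nonneg _).trans (hKbd 0)
  have hK2 : Integrable (fun z => K z ^ 2) μ := by
    simpa only [sq] using hK.bdd_mul hK.aestronglyMeasurable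
      (.of_forall fun z => (Real.norm_eq_abs _).trans_le (hKbd z))
  have hshift : Tendsto (fun n => ∫ z, |K (z - b n) - K z| ∂μ) l (𝓝 0) := by
    have := hK.tendsto_integral_norm_comp_add_sub.comp (by simpa using hb.neg)
    simpa only [Function.comp_def, Real.norm_eq_abs, sub_eq_neg_add] using this
  have hdiff : ∀ n, Integrable (fun z => |K (z - b n) - K z|) μ := fun n =>
    ((hK.comp_sub_right (b n)).sub hK).abs
  have hbd₁ (n z) :
      |K z * (K (z - b n) - K z) * ψ n z| ≤ CK * C * |K (z - b n) - K z| := by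
    rw [abs_mul, abs_mul]
    calc |K z| * |K (z - b n) - K z| * |ψ n z| ≤ CK * |K (z - b n) - K z| * C :=
          mul_le_mul (mul_le_mul_of_nonneg_right (hKbd z) (abs_nonneg _)) (hψbd n z)
            (abs_nonneg _) (mul_nonneg hCK (abs_nonneg _))
      _ = CK * C * |K (z - b n) - K z| := by ring
  have hbd₂ (n z) : |K z ^ 2 * ψ n z| ≤ K z ^ 2 * C := by
    rw [abs_mul, abs_sq]
    exact mul_le_mul_of_nonneg_left (hψbd n z) (sq_nonneg _)
  have hint₁ : ∀ n, Integrable (fun z => K z * (K (z - b n) - K z) * ψ n z) μ := fun n =>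
    ((hdiff n).const_mul (CK * C)).mono'
      ((hK.aestronglyMeasurable.mul
        ((hK.comp_sub_right (b n)).sub hK).aestronglyMeasurable).mul (hψm n))
      (.of_forall (hbd₁ n))
  have hint₂ : ∀ n, Integrable (fun z => K z ^ 2 * ψ n z) μ := fun n =>
    (hK2.mul_const C).mono' (hK2.aestronglyMeasurable.mul (hψm n)) (.of_forall (hbd₂ n))
  have hT₁ : Tendsto (fun n => ∫ z, K z * (K (z - b n) - K z) * ψ n z ∂μ) l (𝓝 0) := by
    refine squeeze_zero_norm (fun n => ?_) (by simpa using hshift.const_mul (CK * C))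
    rw [← integral_const_mul]
    exact norm_integral_le_of_norm_le ((hdiff n).const_mul _) (.of_forall (hbd₁ n))
  have hT₂ :
      Tendsto (fun n => ∫ z, K z ^ 2 * ψ n z ∂μ) l (𝓝 (∫ z, K z ^ 2 * c ∂μ)) :=
    tendsto_integral_filter_of_dominated_convergence _
      (.of_forall fun n => (hint₂ n).aestronglyMeasurable)
      (.of_forall fun n => .of_forall (hbd₂ n)) (hK2.mul_const C)
      (.of_forall fun z => (hψ z).const_mul _)
  have hsum := hT₁.add hT₂
  rw [zero_add, integral_mul_const, mul_comm] at hsum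
  refine hsum.congr fun n => ?_
  rw [← integral_add (hint₁ n) (hint₂ n)]
  congr 1 with z
  ring

end ShiftedProduct

section Rescaling

variable {ι : Type*}

theorem integral_comp_mul_pi [Fintype ι] {E : Type*} [NormedAddCommGroup E]
    [NormedSpace ℝ E] {c : ι → ℝ} (hc : ∀ j, c j ≠ 0) (f : (ι → ℝ) → E) :
    ∫ x, f (c * x) = |∏ j, c j|⁻¹ • ∫ x, f x := by
  classical
  let e : (ι → ℝ) ≃ᵐ (ι → ℝ) := MeasurableEquiv.piCongrRight fun j =>
    (Homeomorph.mulLeft₀ (c j) (hc j)).toMeasurableEquiv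
  have he : ⇑e = Matrix.toLin' (Matrix.diagonal c) := by
    ext x j
    simp only [Matrix.toLin'_apply, Matrix.mulVec_diagonal]
    rfl
  have hdet : (Matrix.diagonal c).det ≠ 0 := by
    rw [Matrix.det_diagonal]
    exact Finset.prod_ne_zero_iff.2 fun j _ => hc j
  calc ∫ x, f (c * x) = ∫ x, f (e x) := rfl
    _ = ∫ x, f x ∂(Measure.map e volume) := (integral_map_equiv e f).symm
    _ = |∏ j, c j|⁻¹ • ∫ x, f x := by
      rw [he, Real.map_matrix_volume_pi_eq_smul_volume_pi hdet, integral_smul_measure,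
        Matrix.det_diagonal, ENNReal.toReal_ofReal (abs_nonneg _), abs_inv]

def overlapIntegrand (K w : (ι → ℝ) → ℝ) (a b u z : ι → ℝ) : ℝ :=
  K z * K (z - (a * b)⁻¹ * u) * (w (b * z) * w (b * z - a⁻¹ * u))

variable {σ K w : (ι → ℝ) → ℝ} {CK Cw : ℝ}

theorem abs_overlapIntegrand_le (hKbd : ∀ z, |K z| ≤ CK) (hwbd : ∀ z, |w z| ≤ Cw)
    (a b u z : ι → ℝ) : |overlapIntegrand K w a b u z| ≤ CK * Cw ^ 2 * |K z| := by
  have hCK : 0 ≤ CK := (abs_nonneg _).trans (hKbd 0)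
  have hww : |w (b * z) * w (b * z - a⁻¹ * u)| ≤ Cw ^ 2 := by
    rw [abs_mul, sq]
    exact mul_le_mul (hwbd _) (hwbd _) (abs_nonneg _) ((abs_nonneg _).trans (hwbd 0))
  rw [overlapIntegrand, abs_mul, abs_mul]
  calc |K z| * |K (z - (a * b)⁻¹ * u)| * |w (b * z) * w (b * z - a⁻¹ * u)|
      ≤ |K z| * CK * Cw ^ 2 := by gcongr; exact hKbd _
    _ = CK * Cw ^ 2 * |K z| := by ring

theorem measurable_overlapIntegrand (hKm : Measurable K) (hwm : Measurable w) (a b : ι → ℝ) :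
    Measurable fun p : (ι → ℝ) × (ι → ℝ) => overlapIntegrand K w a b p.1 p.2 := by
  unfold overlapIntegrand
  fun_prop

variable [Fintype ι]

theorem integrable_mul_overlapIntegrand (hσ : Integrable σ) (hKm : Measurable K)
    (hK : Integrable K) (hKbd : ∀ z, |K z| ≤ CK) (hwm : Measurable w)
    (hwbd : ∀ z, |w z| ≤ Cw) (a b : ι → ℝ) :
    Integrable (fun p : (ι → ℝ) × (ι → ℝ) => σ p.1 * overlapIntegrand K w a b p.1 p.2)
      (volume.prod volume) := by
  refine ((hσ.abs.mul_prod hK.abs).const_mul (CK * Cw ^ 2)).mono'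
    (hσ.aestronglyMeasurable.comp_fst.mul
      (measurable_overlapIntegrand hKm hwm a b).aestronglyMeasurable) (.of_forall fun p => ?_)
  rw [Real.norm_eq_abs, abs_mul]
  calc |σ p.1| * |overlapIntegrand K w a b p.1 p.2| ≤ |σ p.1| * (CK * Cw ^ 2 * |K p.2|) :=
        mul_le_mul_of_nonneg_left (abs_overlapIntegrand_le hKbd hwbd a b _ _) (abs_nonneg _)
    _ = CK * Cw ^ 2 * (|σ p.1| * |K p.2|) := by ring

theorem abs_integral_overlapIntegrand_le (hK : Integrable K) (hKbd : ∀ z, |K z| ≤ CK)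
    (hwbd : ∀ z, |w z| ≤ Cw) (a b u : ι → ℝ) :
    |∫ z, overlapIntegrand K w a b u z| ≤ CK * Cw ^ 2 * ∫ z, |K z| := by
  rw [← integral_const_mul, ← Real.norm_eq_abs]
  exact norm_integral_le_of_norm_le (hK.abs.const_mul _)
    (.of_forall (abs_overlapIntegrand_le hKbd hwbd a b u))

theorem integral_integral_eq_integral_mul_overlapIntegrand (hσ : Integrable σ)
    (hKm : Measurable K) (hK : Integrable K) (hKbd : ∀ z, |K z| ≤ CK) (hwm : Measurable w)
    (hwbd : ∀ z, |w z| ≤ Cw) {a b : ι → ℝ} (ha : ∀ j, a j ≠ 0)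
    (hb : ∀ j, b j ≠ 0) :
    |∏ j, a j| / |∏ j, b j| * ∫ y₁, ∫ y₂,
        σ (a * (y₁ - y₂)) * (K (y₁ / b) * K (y₂ / b)) * (w y₁ * w y₂) =
      ∫ u, σ u * ∫ z, overlapIntegrand K w a b u z := by
  set g : (ι → ℝ) → (ι → ℝ) → ℝ := fun y₁ y₂ =>
    σ (a * (y₁ - y₂)) * (K (y₁ / b) * K (y₂ / b)) * (w y₁ * w y₂)
  have hPa : |∏ j, a j| ≠ 0 := abs_ne_zero.2 (Finset.prod_ne_zero_iff.2 fun j _ => ha j)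
  have hPb : |∏ j, b j| ≠ 0 := abs_ne_zero.2 (Finset.prod_ne_zero_iff.2 fun j _ => hb j)
  have hinner (y₁) :
      ∫ y₂, g y₁ y₂ = |∏ j, a j|⁻¹ * ∫ u, g y₁ (y₁ - a⁻¹ * u) := by
    rw [integral_comp_mul_pi (c := a⁻¹) (fun j => inv_ne_zero (ha j)) fun v => g y₁ (y₁ - v),
      integral_sub_left_eq_self (g y₁), smul_eq_mul]
    simp only [Pi.inv_apply, Finset.prod_inv_distrib, abs_inv, inv_inv,
      inv_mul_cancel_left₀ hPa]
  have houter := integral_comp_mul_pi hb fun y₁ => ∫ u, g y₁ (y₁ - a⁻¹ * u)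
  have hsubst (z u) :
      g (b * z) (b * z - a⁻¹ * u) = σ u * overlapIntegrand K w a b u z := by
    have h₁ : a * (b * z - (b * z - a⁻¹ * u)) = u := by ext j; simp [ha j]
    have h₂ : b * z / b = z := by ext j; simp [hb j]
    have h₃ : (b * z - a⁻¹ * u) / b = z - (a * b)⁻¹ * u := by
      ext j
      simp only [Pi.div_apply, Pi.sub_apply, Pi.mul_apply, Pi.inv_apply]
      field_simp [hb j]
    simp only [g, overlapIntegrand, h₁, h₂, h₃, mul_assoc]
  calc |∏ j, a j| / |∏ j, b j| * ∫ y₁, ∫ y₂, g y₁ y₂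
      = |∏ j, b j|⁻¹ * ∫ y₁, ∫ u, g y₁ (y₁ - a⁻¹ * u) := by
        simp only [hinner, integral_const_mul]
        field_simp
    _ = ∫ z, ∫ u, σ u * overlapIntegrand K w a b u z := by
        rw [← smul_eq_mul, ← houter]
        simp only [hsubst]
    _ = ∫ u, σ u * ∫ z, overlapIntegrand K w a b u z := by
        rw [← integral_integral_swap
          (integrable_mul_overlapIntegrand hσ hKm hK hKbd hwm hwbd a b)]
        simp only [integral_const_mul]

variable {α : Type*} {l : Filter α} [l.IsCountablyGenerated] {a b : α → ι → ℝ}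

theorem tendsto_integral_overlapIntegrand (hK : Integrable K) (hKbd : ∀ z, |K z| ≤ CK)
    (hwm : Measurable w) (hwbd : ∀ z, |w z| ≤ Cw) (hw0 : ContinuousAt w 0)
    (hb : Tendsto b l (𝓝 0)) (ha : Tendsto (fun n => (a n)⁻¹) l (𝓝 0))
    (hab : Tendsto (fun n => (a n * b n)⁻¹) l (𝓝 0)) (u : ι → ℝ) :
    Tendsto (fun n => ∫ z, overlapIntegrand K w (a n) (b n) u z) l
      (𝓝 (w 0 ^ 2 * ∫ z, K z ^ 2)) := by
  have hbz (z) : Tendsto (fun n => b n * z) l (𝓝 0) := by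
    simpa using hb.mul_const z
  have hbzu (z) : Tendsto (fun n => b n * z - (a n)⁻¹ * u) l (𝓝 0) := by
    simpa using (hb.mul_const z).sub (ha.mul_const u)
  rw [sq]
  refine tendsto_integral_mul_comp_sub_mul hK hKbd (by simpa using hab.mul_const u)
    (ψ := fun n z => w (b n * z) * w (b n * z - (a n)⁻¹ * u))
    (fun n => ((hwm.comp (measurable_const_mul _)).mul
      (hwm.comp ((measurable_const_mul _).sub_const _))).aestronglyMeasurable)
    (C := Cw ^ 2) (fun n z => ?_) fun z =>
      (hw0.tendsto.comp (hbz z)).mul (hw0.tendsto.comp (hbzu z))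
  rw [abs_mul, sq]
  exact mul_le_mul (hwbd _) (hwbd _) (abs_nonneg _) ((abs_nonneg _).trans (hwbd 0))

theorem tendsto_integral_mul_integral_overlapIntegrand (hσ : Integrable σ)
    (hKm : Measurable K) (hK : Integrable K) (hKbd : ∀ z, |K z| ≤ CK) (hwm : Measurable w)
    (hwbd : ∀ z, |w z| ≤ Cw) (hw0 : ContinuousAt w 0) (hb : Tendsto b l (𝓝 0))
    (ha : Tendsto (fun n => (a n)⁻¹) l (𝓝 0))
    (hab : Tendsto (fun n => (a n * b n)⁻¹) l (𝓝 0)) :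
    Tendsto (fun n => ∫ u, σ u * ∫ z, overlapIntegrand K w (a n) (b n) u z) l
      (𝓝 (w 0 ^ 2 * (∫ u, σ u) * ∫ z, K z ^ 2)) := by
  have hlim := tendsto_integral_filter_of_dominated_convergence
    (fun u => |σ u| * (CK * Cw ^ 2 * ∫ z, |K z|))
    (.of_forall fun n => by
      simpa only [integral_const_mul] using (integrable_mul_overlapIntegrand hσ hKm hK hKbd hwm
        hwbd (a n) (b n)).integral_prod_left.aestronglyMeasurable)
    (.of_forall fun n => .of_forall fun u => by
      rw [Real.norm_eq_abs, abs_mul]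
      exact mul_le_mul_of_nonneg_left (abs_integral_overlapIntegrand_le hK hKbd hwbd _ _ u)
        (abs_nonneg _))
    (hσ.abs.mul_const _)
    (.of_forall fun u =>
      (tendsto_integral_overlapIntegrand hK hKbd hwm hwbd hw0 hb ha hab u).const_mul (σ u))
  rwa [integral_mul_const, mul_left_comm, ← mul_assoc] at hlim

end Rescaling

theorem covariance_scaling_limit_general
    (d : ℕ)
    (σ K w : (Fin d → ℝ) → ℝ)
    (hσint : Integrable σ)
    (hKmeas : Measurable K) (CK : ℝ) (hKbd : ∀ z, |K z| ≤ CK)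
    (hKsupp : ∀ z : Fin d → ℝ,
      z ∉ Set.Icc (fun _ => -(1/2 : ℝ)) (fun _ => (1/2 : ℝ)) → K z = 0)
    (hwmeas : Measurable w) (Cw : ℝ) (hwbd : ∀ z, |w z| ≤ Cw)
    (hwcont : ContinuousAt w 0)
    (A h : ℕ → Fin d → ℝ)
    (hA : ∀ n j, 0 < A n j) (hh : ∀ n j, 0 < h n j)
    (hh0 : ∀ j, Tendsto (fun n => h n j) atTop (𝓝 0))
    (hAh : ∀ j, Tendsto (fun n => A n j * h n j) atTop atTop) :
    Tendsto (fun n =>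
        ((∏ j, A n j) / (∏ j, h n j)) *
          ∫ y₁ : Fin d → ℝ, ∫ y₂ : Fin d → ℝ,
            σ (fun j => A n j * (y₁ j - y₂ j)) *
              (K (fun j => y₁ j / h n j) * K (fun j => y₂ j / h n j)) *
              (w y₁ * w y₂))
      atTop
      (𝓝 (w 0 ^ 2 * (∫ v : Fin d → ℝ, σ v) * ∫ z : Fin d → ℝ, (K z) ^ 2)) := by
  have hK : Integrable K :=
    (integrableOn_iff_integrable_of_support_subset (Function.support_subset_iff'.2 hKsupp)).1
      (IntegrableOn.of_bound isCompact_Icc.measure_lt_top hKmeas.aestronglyMeasurable CK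
        (.of_forall hKbd))
  have hh₀ : Tendsto h atTop (𝓝 0) := tendsto_pi_nhds.2 hh0
  have hAh₀ : Tendsto (fun n => (A n * h n)⁻¹) atTop (𝓝 0) :=
    tendsto_pi_nhds.2 fun j => tendsto_inv_atTop_zero.comp (hAh j)
  -- `A_n⁻¹ = h_n ∘ (A_n ∘ h_n)⁻¹`
  have hA₀ : Tendsto (fun n => (A n)⁻¹) atTop (𝓝 0) := by
    refine (zero_mul (0 : Fin d → ℝ) ▸ hh₀.mul hAh₀).congr fun n => ?_
    ext j
    simp [(hh n j).ne']
  refine (tendsto_integral_mul_integral_overlapIntegrand hσint hKmeas hK hKbd hwmeas hwbd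
    hwcont hh₀ hA₀ hAh₀).congr fun n => ?_
  rw [← integral_integral_eq_integral_mul_overlapIntegrand hσint hKmeas hK hKbd hwmeas hwbd
    (fun j => (hA n j).ne') (fun j => (hh n j).ne'),
    abs_of_pos (Finset.prod_pos fun j _ => hA n j),
    abs_of_pos (Finset.prod_pos fun j _ => hh n j)]
  rfl

/-- the deterministic scaling limit underlying the spatial-dependence
component of the asymptotic variance: if `σ ∈ L¹(ℝ^d)`, `K` is bounded measurable with
support in `[−1/2,1/2]^d`, `w` is bounded measurable and continuous at `0`, and the
positive sequences satisfy `h_{n,j} → 0`, `A_{n,j} h_{n,j} → ∞`, then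
`(|A_n|/|h_n|) ∬ σ(A_n∘(y₁−y₂)) K_{h_n}(y₁) K_{h_n}(y₂) w(y₁) w(y₂) dy₁ dy₂
  → w(0)² (∫σ)(∫K²)`. -/
theorem covariance_scaling_limit
    (d : ℕ) (hd : 1 ≤ d)
    (σ K w : (Fin d → ℝ) → ℝ)
    (hσint : Integrable σ)
    (hKmeas : Measurable K) (CK : ℝ) (hKbd : ∀ z, |K z| ≤ CK)
    (hKsupp : ∀ z : Fin d → ℝ,
      z ∉ Set.Icc (fun _ => -(1/2 : ℝ)) (fun _ => (1/2 : ℝ)) → K z = 0)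
    (hwmeas : Measurable w) (Cw : ℝ) (hwbd : ∀ z, |w z| ≤ Cw)
    (hwcont : ContinuousAt w 0)
    (A h : ℕ → Fin d → ℝ)
    (hA : ∀ n j, 0 < A n j) (hh : ∀ n j, 0 < h n j)
    (hh0 : ∀ j, Tendsto (fun n => h n j) atTop (𝓝 0))
    (hAh : ∀ j, Tendsto (fun n => A n j * h n j) atTop atTop) :
    Tendsto (fun n =>
        ((∏ j, A n j) / (∏ j, h n j)) *
          ∫ y₁ : Fin d → ℝ, ∫ y₂ : Fin d → ℝ,
            σ (fun j => A n j * (y₁ j - y₂ j)) *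
              (K (fun j => y₁ j / h n j) * K (fun j => y₂ j / h n j)) *
              (w y₁ * w y₂))
      atTop
      (𝓝 (w 0 ^ 2 * (∫ v : Fin d → ℝ, σ v) * ∫ z : Fin d → ℝ, (K z) ^ 2)) :=
  covariance_scaling_limit_general d σ K w hσint hKmeas CK hKbd hKsupp hwmeas Cw hwbd hwcont A h hA
    hh hh0 hAh
end
end

section
/- For every integer d ≥ 1 there exists a constant C > 0, depending only on d, such that for every finite subset I ⊂ ℤ^d and all integers k₂, k₃ ≥ 1: #{ (i, j, l, p) ∈ I⁴ : i, j, l, p pairwise distinct, d₂(i, j, l, p) = k₂ and d₃(i, j, l, p) = k₃ } ≤ C·(k₂ + k₃)^{3d−1}·#I, where for finite nonempty disjoint sets T₁, T₂ ⊂ ℤ^d, d(T₁,T₂) := min{ |x − y|₁ : x ∈ T₁, y ∈ T₂ } with |·|₁ the ℓ¹-norm, d₂(i,j,l,p) := max over one-element subsets J of {i,j,l,p} of d(J, {i,j,l,p}∖J), and d₃(i,j,l,p) := max over two-element subsets J of {i,j,l,p} of d(J, {i,j,l,p}∖J). -/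
/-! Each counted quadruple has one of its six pairs at ℓ¹ distance exactly `k₂`, and all its
points lie within `R = 3 k₂ + k₃` of each other. Placing that pair first, the quadruple becomes
`(a, b, c, e)` with `a ∈ I`, `b` on the ℓ¹ sphere of radius `k₂` about `a` (at most
`2 (2R+1)^(d-1)` points) and `c, e` in the box of radius `R` about `a` (`(2R+1)^d` points each).
This gives at most `6 · 2 (2R+1)^(3d-1) #I ≤ 12 · 7^(3d-1) (k₂+k₃)^(3d-1) #I` quadruples. -/

set_option autoImplicit false

open Filter Topology

noncomputable section

/-- ℓ¹ distance between two lattice points. -/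
def l1dist {d : ℕ} (x y : Fin d → ℤ) : ℤ := ∑ j, |x j - y j|

/-- `d({a},{b,c,e})`: distance of a singleton to the remaining three points. -/
def gap1to3 {d : ℕ} (a b c e : Fin d → ℤ) : ℤ :=
  min (l1dist a b) (min (l1dist a c) (l1dist a e))

/-- `d₂(i,j,l,p)`: the maximum, over the one-element subsets `J` of `{i,j,l,p}`,
of the minimal ℓ¹ distance from `J` to its complement. -/
def d2gap {d : ℕ} (i j l p : Fin d → ℤ) : ℤ :=
  max (gap1to3 i j l p) (max (gap1to3 j i l p) (max (gap1to3 l i j p) (gap1to3 p i j l)))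

/-- `d({a,b},{c,e})`: minimal ℓ¹ distance between two two-element sets. -/
def gap2to2 {d : ℕ} (a b c e : Fin d → ℤ) : ℤ :=
  min (min (l1dist a c) (l1dist a e)) (min (l1dist b c) (l1dist b e))

/-- `d₃(i,j,l,p)`: the maximum, over the two-element subsets `J` of `{i,j,l,p}`,
of the minimal ℓ¹ distance from `J` to its complement. -/
def d3gap {d : ℕ} (i j l p : Fin d → ℤ) : ℤ :=
  max (gap2to2 i j l p) (max (gap2to2 i l j p) (gap2to2 i p j l))

open Finset

section LatticeGeometry

variable {d : ℕ}

lemma l1dist_comm (x y : Fin d → ℤ) : l1dist x y = l1dist y x :=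
  sum_congr rfl fun _ _ => abs_sub_comm _ _

lemma l1dist_triangle (x y z : Fin d → ℤ) : l1dist x z ≤ l1dist x y + l1dist y z := by
  rw [l1dist, l1dist, l1dist, ← sum_add_distrib]
  exact sum_le_sum fun _ _ => abs_sub_le _ _ _

def latticeBox (c : Fin d → ℤ) (R : ℕ) : Finset (Fin d → ℤ) :=
  Fintype.piFinset fun j => Icc (c j - R) (c j + R)

lemma card_latticeBox (c : Fin d → ℤ) (R : ℕ) : #(latticeBox c R) = (2 * R + 1) ^ d := by
  have hside (j : Fin d) : #(Icc (c j - R) (c j + R)) = 2 * R + 1 := by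
    rw [Int.card_Icc]
    omega
  simp only [latticeBox, Fintype.card_piFinset, hside, prod_const, card_univ, Fintype.card_fin]

lemma mem_latticeBox_of_l1dist_le {x c : Fin d → ℤ} {R : ℕ} (h : l1dist x c ≤ R) :
    x ∈ latticeBox c R := by
  refine Fintype.mem_piFinset.2 fun j => mem_Icc.2 ?_
  have hj : |x j - c j| ≤ l1dist x c :=
    single_le_sum (f := fun j => |x j - c j|) (fun _ _ => abs_nonneg _) (mem_univ j)
  have := abs_le.1 (hj.trans h)
  omega

def l1sphere (c : Fin d → ℤ) (r : ℕ) : Finset (Fin d → ℤ) :=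
  (latticeBox c r).filter fun x => l1dist x c = r

lemma mem_l1sphere {x c : Fin d → ℤ} {r : ℕ} : x ∈ l1sphere c r ↔ l1dist x c = r :=
  ⟨fun h => (mem_filter.1 h).2, fun h => mem_filter.2 ⟨mem_latticeBox_of_l1dist_le h.le, h⟩⟩

/-- On a sphere, a point is determined by its first `d - 1` coordinates up to the sign of the
last one. -/
lemma card_l1sphere_le (c : Fin d → ℤ) (r : ℕ) : #(l1sphere c r) ≤ 2 * (2 * r + 1) ^ (d - 1) := by
  cases d with
  | zero => exact (card_le_one_of_subsingleton _).trans (by simp)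
  | succ n =>
    have hsplit (x : Fin (n + 1) → ℤ) :
        l1dist x c = l1dist (Fin.init x) (Fin.init c) + |x (Fin.last n) - c (Fin.last n)| :=
      Fin.sum_univ_castSucc _
    calc #(l1sphere c r)
        ≤ #(latticeBox (Fin.init c) r ×ˢ (univ : Finset Bool)) := by
          refine card_le_card_of_injOn
            (fun x => (Fin.init x, decide (c (Fin.last n) ≤ x (Fin.last n)))) ?_ ?_
          · intro x hx
            refine mem_product.2 ⟨mem_latticeBox_of_l1dist_le ?_, mem_univ _⟩
            have := (hsplit x).symm.trans (mem_l1sphere.1 hx)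
            have := abs_nonneg (x (Fin.last n) - c (Fin.last n))
            dsimp only
            omega
          · intro x hx y hy hxy
            obtain ⟨hinit, hsign⟩ := Prod.mk.inj hxy
            have hx := (hsplit x).symm.trans (mem_l1sphere.1 hx)
            have hy := (hsplit y).symm.trans (mem_l1sphere.1 hy)
            rw [hinit] at hx
            have hlast : x (Fin.last n) = y (Fin.last n) := by
              simp only [decide_eq_decide] at hsign
              rcases abs_cases (x (Fin.last n) - c (Fin.last n)) with hx' | hx' <;>
                rcases abs_cases (y (Fin.last n) - c (Fin.last n)) with hy' | hy' <;> omega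
            rw [← Fin.snoc_init_self x, ← Fin.snoc_init_self y, hinit, hlast]
      _ = 2 * (2 * r + 1) ^ n := by
          rw [card_product, card_latticeBox, card_univ, Fintype.card_bool, mul_comm]

end LatticeGeometry

section Quadruples

variable {d : ℕ}

lemma exists_l1dist_eq_of_d2gap_eq {i j l p : Fin d → ℤ} {k : ℤ} (h : d2gap i j l p = k) :
    l1dist i j = k ∨ l1dist i l = k ∨ l1dist i p = k ∨
      l1dist j l = k ∨ l1dist j p = k ∨ l1dist l p = k := by
  have hmem : d2gap i j l p ∈ ({l1dist i j, l1dist i l, l1dist i p, l1dist j l, l1dist j p,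
      l1dist l p} : Set ℤ) := by
    simp only [d2gap, gap1to3, l1dist_comm j i, l1dist_comm l i, l1dist_comm l j,
      l1dist_comm p i, l1dist_comm p j, l1dist_comm p l]
    repeat' first | apply max_rec' (· ∈ _) | apply min_rec' (· ∈ _)
    all_goals simp
  simpa [h, eq_comm] using hmem

/-- Each point has a neighbour within `a`. If these nearest-neighbour edges connect the four
points, any two are joined by at most three of them; otherwise they form two pairs, joined to
each other by a step of length at most `b`. -/
lemma l1dist_le_of_d2gap_le_of_d3gap_le {i j l p : Fin d → ℤ} {a b : ℤ}
    (h2 : d2gap i j l p ≤ a) (h3 : d3gap i j l p ≤ b) :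
    l1dist i j ≤ 3 * a + b ∧ l1dist i l ≤ 3 * a + b ∧ l1dist i p ≤ 3 * a + b ∧
      l1dist j l ≤ 3 * a + b ∧ l1dist j p ≤ 3 * a + b ∧ l1dist l p ≤ 3 * a + b := by
  have := l1dist_triangle i j l
  have := l1dist_triangle i l j
  have := l1dist_triangle i j p
  have := l1dist_triangle i p j
  have := l1dist_triangle i l p
  have := l1dist_triangle i p l
  have := l1dist_triangle j i l
  have := l1dist_triangle j l p
  have := l1dist_triangle j i p
  have := l1dist_triangle j p l
  have := l1dist_triangle l i p
  have := l1dist_triangle l j p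
  simp only [d2gap, d3gap, gap1to3, gap2to2, l1dist_comm j i, l1dist_comm l i, l1dist_comm l j,
    l1dist_comm p i, l1dist_comm p j, l1dist_comm p l, max_le_iff, min_le_iff] at *
  omega

def anchoredQuadruples (I : Finset (Fin d → ℤ)) (r R : ℕ) :
    Finset ((Fin d → ℤ) × (Fin d → ℤ) × (Fin d → ℤ) × (Fin d → ℤ)) :=
  I.biUnion fun a => {a} ×ˢ l1sphere a r ×ˢ latticeBox a R ×ˢ latticeBox a R

lemma mk_mem_anchoredQuadruples {I : Finset (Fin d → ℤ)} {r R : ℕ} {a b c e : Fin d → ℤ}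
    (ha : a ∈ I) (hb : l1dist a b = r) (hc : l1dist a c ≤ R) (he : l1dist a e ≤ R) :
    (a, b, c, e) ∈ anchoredQuadruples I r R := by
  rw [l1dist_comm] at hb hc he
  exact mem_biUnion.2 ⟨a, ha, mem_product.2 ⟨mem_singleton_self a, mem_product.2
    ⟨mem_l1sphere.2 hb, mem_product.2
      ⟨mem_latticeBox_of_l1dist_le hc, mem_latticeBox_of_l1dist_le he⟩⟩⟩⟩

lemma card_anchoredQuadruples_le (I : Finset (Fin d → ℤ)) {r R : ℕ} (hrR : r ≤ R) :
    #(anchoredQuadruples I r R) ≤ 2 * (2 * R + 1) ^ (3 * d - 1) * #I := by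
  rw [mul_comm]
  refine card_biUnion_le_card_mul _ _ _ fun a _ => ?_
  rw [card_product, card_product, card_product, card_singleton, card_latticeBox, one_mul]
  calc #(l1sphere a r) * ((2 * R + 1) ^ d * (2 * R + 1) ^ d)
      ≤ 2 * (2 * R + 1) ^ (d - 1) * ((2 * R + 1) ^ d * (2 * R + 1) ^ d) := by
        gcongr
        exact (card_l1sphere_le a r).trans (by gcongr)
    _ = 2 * (2 * R + 1) ^ (3 * d - 1) := by
        rw [mul_assoc, ← pow_add, ← pow_add]
        congr 2
        omega

def placePair {α : Type*} : Fin 6 → α × α × α × α → α × α × α × α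
  | 0, (a, b, c, e) => (a, b, c, e)
  | 1, (a, b, c, e) => (a, c, b, e)
  | 2, (a, b, c, e) => (a, c, e, b)
  | 3, (a, b, c, e) => (c, a, b, e)
  | 4, (a, b, c, e) => (c, a, e, b)
  | 5, (a, b, c, e) => (c, e, a, b)

lemma mem_biUnion_image_placePair {I : Finset (Fin d → ℤ)} {k₂ k₃ : ℕ} {i j l p : Fin d → ℤ}
    (hi : i ∈ I) (hj : j ∈ I) (hl : l ∈ I)
    (h2 : d2gap i j l p = k₂) (h3 : d3gap i j l p ≤ k₃) :
    (i, j, l, p) ∈ univ.biUnion fun k : Fin 6 =>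
      (anchoredQuadruples I k₂ (3 * k₂ + k₃)).image (placePair k) := by
  obtain ⟨hij, hil, hip, hjl, hjp, hlp⟩ := l1dist_le_of_d2gap_le_of_d3gap_le h2.le h3
  have hji := (l1dist_comm j i).trans_le hij
  have hli := (l1dist_comm l i).trans_le hil
  have hlj := (l1dist_comm l j).trans_le hjl
  simp only [mem_biUnion, mem_univ, mem_image, true_and]
  rcases exists_l1dist_eq_of_d2gap_eq h2 with h | h | h | h | h | h
  · exact ⟨0, (i, j, l, p), mk_mem_anchoredQuadruples hi h hil hip, rfl⟩
  · exact ⟨1, (i, l, j, p), mk_mem_anchoredQuadruples hi h hij hip, rfl⟩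
  · exact ⟨2, (i, p, j, l), mk_mem_anchoredQuadruples hi h hij hil, rfl⟩
  · exact ⟨3, (j, l, i, p), mk_mem_anchoredQuadruples hj h hji hjp, rfl⟩
  · exact ⟨4, (j, p, i, l), mk_mem_anchoredQuadruples hj h hji hjl, rfl⟩
  · exact ⟨5, (l, p, i, j), mk_mem_anchoredQuadruples hl h hli hlj, rfl⟩

end Quadruples

theorem quadruple_counting_bound_general (d : ℕ) :
    ∃ C : ℝ, 0 < C ∧ ∀ (I : Finset (Fin d → ℤ)) (k₂ k₃ : ℕ), 1 ≤ k₂ → 1 ≤ k₃ →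
      (((I ×ˢ I ×ˢ I ×ˢ I).filter
          fun t : (Fin d → ℤ) × (Fin d → ℤ) × (Fin d → ℤ) × (Fin d → ℤ) =>
          t.1 ≠ t.2.1 ∧ t.1 ≠ t.2.2.1 ∧ t.1 ≠ t.2.2.2 ∧
          t.2.1 ≠ t.2.2.1 ∧ t.2.1 ≠ t.2.2.2 ∧ t.2.2.1 ≠ t.2.2.2 ∧
          d2gap t.1 t.2.1 t.2.2.1 t.2.2.2 = (k₂ : ℤ) ∧
          d3gap t.1 t.2.1 t.2.2.1 t.2.2.2 = (k₃ : ℤ)).card : ℝ) ≤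
        C * ((k₂ : ℝ) + (k₃ : ℝ)) ^ (3 * d - 1) * (I.card : ℝ) := by
  refine ⟨12 * 7 ^ (3 * d - 1), by positivity, fun I k₂ k₃ hk₂ _ => ?_⟩
  calc _ ≤ (#(univ.biUnion fun k : Fin 6 =>
        (anchoredQuadruples I k₂ (3 * k₂ + k₃)).image (placePair k)) : ℝ) := by
        gcongr
        rintro ⟨i, j, l, p⟩ ht
        obtain ⟨⟨hi, hj, hl, -⟩, -, -, -, -, -, -, h2, h3⟩ := by simpa using ht
        exact mem_biUnion_image_placePair hi hj hl h2 h3.le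
    _ ≤ ((6 * (2 * (2 * (3 * k₂ + k₃) + 1) ^ (3 * d - 1) * #I) : ℕ) : ℝ) := by
        gcongr
        refine (card_biUnion_le_card_mul _ _ _ fun _ _ => card_image_le).trans ?_
        simpa using card_anchoredQuadruples_le I (by omega : k₂ ≤ 3 * k₂ + k₃)
    _ ≤ ((6 * (2 * (7 * (k₂ + k₃)) ^ (3 * d - 1) * #I) : ℕ) : ℝ) := by
        gcongr
        omega
    _ = _ := by
        push_cast
        rw [mul_pow]
        ring

/-- there is `C > 0` depending only on `d` such that for every finite
`I ⊂ ℤ^d` and all `k₂, k₃ ≥ 1`, the number of quadruples of pairwise distinct points of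
`I` with `d₂ = k₂` and `d₃ = k₃` is at most `C (k₂+k₃)^{3d−1} #I`. -/
theorem quadruple_counting_bound (d : ℕ) (hd : 1 ≤ d) :
    ∃ C : ℝ, 0 < C ∧ ∀ (I : Finset (Fin d → ℤ)) (k₂ k₃ : ℕ), 1 ≤ k₂ → 1 ≤ k₃ →
      (((I ×ˢ I ×ˢ I ×ˢ I).filter
          fun t : (Fin d → ℤ) × (Fin d → ℤ) × (Fin d → ℤ) × (Fin d → ℤ) =>
          t.1 ≠ t.2.1 ∧ t.1 ≠ t.2.2.1 ∧ t.1 ≠ t.2.2.2 ∧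
          t.2.1 ≠ t.2.2.1 ∧ t.2.1 ≠ t.2.2.2 ∧ t.2.2.1 ≠ t.2.2.2 ∧
          d2gap t.1 t.2.1 t.2.2.1 t.2.2.2 = (k₂ : ℤ) ∧
          d3gap t.1 t.2.1 t.2.2.1 t.2.2.2 = (k₃ : ℤ)).card : ℝ) ≤
        C * ((k₂ : ℝ) + (k₃ : ℝ)) ^ (3 * d - 1) * (I.card : ℝ) :=
  quadruple_counting_bound_general d
end
end
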